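/- Let P ⊂ ℚ² be a symmetric Fano polygon and E an edge of P with primitive inner normal u and height h. Then P is contained in the strip {x ∈ ℚ² : -h ≤ u(x) ≤ 2h}. -/

import Mathlib

abbrev Z2 := ℤ × ℤ
abbrev Q2 := ℚ × ℚ

/-- The canonical embedding of lattice points into `ℚ × ℚ`. -/
def toQ (v : Z2) : Q2 := ((v.1 : ℚ), (v.2 : ℚ))

/-- Pairing of a dual lattice vector with a rational point. -/
def dotQ (u : Z2) (x : Q2) : ℚ := (u.1 : ℚ) * x.1 + (u.2 : ℚ) * x.2

/-- A lattice vector is primitive if its coordinates are coprime. -/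
def IsPrimitive (v : Z2) : Prop := Int.gcd v.1 v.2 = 1

/-- Action of an integer matrix on `ℚ × ℚ`. -/
def applyM (G : Matrix (Fin 2) (Fin 2) ℤ) (x : Q2) : Q2 :=
  ((G 0 0 : ℚ) * x.1 + (G 0 1 : ℚ) * x.2, (G 1 0 : ℚ) * x.1 + (G 1 1 : ℚ) * x.2)

/-- Action of an integer matrix on `ℤ × ℤ`. -/
def applyZ (G : Matrix (Fin 2) (Fin 2) ℤ) (v : Z2) : Z2 :=
  (G 0 0 * v.1 + G 0 1 * v.2, G 1 0 * v.1 + G 1 1 * v.2)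

/-- The convex hull in `ℚ²` of a finite set of lattice points. -/
def hull (V : Finset Z2) : Set Q2 := convexHull ℚ (toQ '' (V : Set Z2))

/-- `V` is the vertex set of a Fano polygon: the origin is in the strict interior of the
convex hull, every vertex is primitive, and the points of `V` are exactly the vertices
(extreme points) of the hull. -/
def IsFanoPolygon (V : Finset Z2) : Prop :=
  (0 : Q2) ∈ interior (hull V) ∧
  (∀ v ∈ V, IsPrimitive v) ∧
  toQ '' (V : Set Z2) = Set.extremePoints ℚ (hull V)

/-- `E` is the edge of `P` with primitive inner normal `u` and height `h`:
`u ≥ -h` holds on `P`, with equality exactly on `E`, and `E` has more than one point. -/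
def IsEdge (P E : Set Q2) (u : Z2) (h : ℤ) : Prop :=
  IsPrimitive u ∧ 0 < h ∧
  (∀ x ∈ P, -(h : ℚ) ≤ dotQ u x) ∧
  E = {x ∈ P | dotQ u x = -(h : ℚ)} ∧
  ∃ a b, a ∈ E ∧ b ∈ E ∧ a ≠ b

/-- The lattice length of an edge: the number of lattice points on it minus one. -/
noncomputable def latticeLength (E : Set Q2) : ℕ :=
  Set.ncard {v : Z2 | toQ v ∈ E} - 1

/-- An edge is long if its lattice length is at least its height. -/
def IsLongEdge (P E : Set Q2) (u : Z2) (h : ℤ) : Prop :=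
  IsEdge P E u h ∧ h ≤ (latticeLength E : ℤ)

/-- `P` has a non-empty basket of R-singularities: some edge has lattice length
not a multiple of its height. -/
def HasRsing (P : Set Q2) : Prop :=
  ∃ E u h, IsEdge P E u h ∧ ¬ (h ∣ (latticeLength E : ℤ))

/-- Central symmetry: `P = -P`. -/
def CentSym (P : Set Q2) : Prop := ∀ x, x ∈ P ↔ -x ∈ P

/-- `G` is a lattice automorphism of `P`. -/
def IsAut (G : Matrix (Fin 2) (Fin 2) ℤ) (P : Set Q2) : Prop :=
  IsUnit G.det ∧ applyM G '' P = P

/-- `P` admits a lattice automorphism of order 3. -/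
def ThreeSym (P : Set Q2) : Prop := ∃ G, IsAut G P ∧ G ^ 3 = 1 ∧ G ≠ 1

/-- `P` is symmetric: the fixed-point set of its automorphism group is `{0}`. -/
def SymmetricPolygon (P : Set Q2) : Prop :=
  {x : Q2 | ∀ G, IsAut G P → applyM G x = x} = {0}


/- ------------------- auxiliary lemmas ------------------- -/

abbrev M2 := Matrix (Fin 2) (Fin 2) ℤ

lemma applyM_one (x : Q2) : applyM 1 x = x := by
  simp [applyM, Matrix.one_apply]

lemma applyM_mul (A B : M2) (x : Q2) :
    applyM (A * B) x = applyM A (applyM B x) := by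
  simp only [applyM, Matrix.mul_apply, Fin.sum_univ_two]
  refine Prod.ext ?_ ?_ <;> push_cast <;> ring

lemma IsAut.one' (P : Set Q2) : IsAut 1 P := by
  constructor
  · simp
  · have : applyM (1 : M2) = id := funext applyM_one
    simp [this]

lemma IsAut.mul {A B : M2} {P : Set Q2}
    (hA : IsAut A P) (hB : IsAut B P) : IsAut (A * B) P := by
  constructor
  · rw [Matrix.det_mul]; exact hA.1.mul hB.1
  · have : applyM (A * B) = applyM A ∘ applyM B := funext (applyM_mul A B)
    rw [this, Set.image_comp, hB.2, hA.2]

lemma IsAut.pow {A : M2} {P : Set Q2}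
    (hA : IsAut A P) (n : ℕ) : IsAut (A ^ n) P := by
  induction n with
  | zero => simpa using IsAut.one' P
  | succ k ih => rw [pow_succ]; exact ih.mul hA

lemma IsAut.mem {A : M2} {P : Set Q2}
    (hA : IsAut A P) {x : Q2} (hx : x ∈ P) : applyM A x ∈ P := by
  rw [← hA.2]; exact Set.mem_image_of_mem _ hx

lemma CH2 (G : M2) : G^2 = (Matrix.trace G) • G - (Matrix.det G) • (1:M2) := by
  ext i j
  rw [sq, Matrix.mul_apply, Fin.sum_univ_two, Matrix.sub_apply, Matrix.smul_apply,
    Matrix.smul_apply, Matrix.one_apply, Matrix.trace_fin_two, Matrix.det_fin_two]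
  fin_cases i <;> fin_cases j <;> simp [smul_eq_mul] <;> ring

lemma det_sub_one (G : M2) : (G - 1).det = G.det - Matrix.trace G + 1 := by
  simp [Matrix.det_fin_two, Matrix.trace_fin_two, Matrix.sub_apply, Matrix.one_apply]
  ring

lemma trace_rec (G : M2) (k : ℕ) :
    Matrix.trace (G^(k+2)) =
      Matrix.trace G * Matrix.trace (G^(k+1)) - Matrix.det G * Matrix.trace (G^k) := by
  have h : G^(k+2) = Matrix.trace G • G^(k+1) - Matrix.det G • G^k := by
    have h0 : G^(k+2) = G^k * G^2 := by rw [← pow_add]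
    rw [h0, CH2, mul_sub, mul_smul_comm, mul_smul_comm, ← pow_succ, mul_one]
  rw [h, Matrix.trace_sub, Matrix.trace_smul, Matrix.trace_smul, smul_eq_mul, smul_eq_mul]

lemma trace_one2 : Matrix.trace (1:M2) = 2 := by
  simp [Matrix.trace_one]

lemma order_detneg (G : M2) (hd : G.det = -1) (ht : 1 ≤ Matrix.trace G) :
    ∀ n : ℕ, 0 < n → G ^ n ≠ 1 := by
  have hrec : ∀ k : ℕ, Matrix.trace (G^(k+2)) =
      Matrix.trace G * Matrix.trace (G^(k+1)) + Matrix.trace (G^k) := by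
    intro k; rw [trace_rec, hd]; ring
  have pos : ∀ k : ℕ, 1 ≤ Matrix.trace (G^k) ∧ 1 ≤ Matrix.trace (G^(k+1)) := by
    intro k; induction k with
    | zero => refine ⟨by rw [pow_zero, trace_one2]; norm_num, by rw [pow_one]; exact ht⟩
    | succ k ih =>
      refine ⟨ih.2, ?_⟩
      rw [hrec k]
      nlinarith [ih.1, ih.2]
  have big : ∀ k : ℕ, 3 ≤ Matrix.trace (G^(k+2)) := by
    have h2 : 3 ≤ Matrix.trace (G^2) := by
      have := hrec 0
      rw [pow_zero, trace_one2, pow_one] at this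
      rw [show (0+2 : ℕ) = 2 from rfl] at this
      rw [this]; nlinarith
    have step : ∀ k : ℕ, 3 ≤ Matrix.trace (G^(k+2)) ∧ 3 ≤ Matrix.trace (G^(k+3)) := by
      intro k; induction k with
      | zero =>
        refine ⟨h2, ?_⟩
        have := hrec 1
        rw [show (1+2 : ℕ) = 3 from rfl, show (1+1 : ℕ) = 2 from rfl] at this
        rw [this]
        nlinarith [(pos 1).1]
      | succ k ih =>
        refine ⟨by simpa [show k+1+2 = k+3 from rfl] using ih.2, ?_⟩
        have := hrec (k+2)
        rw [show k+2+2 = k+1+3 from rfl, show k+2+1 = k+3 from rfl] at this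
        rw [this]
        nlinarith [ih.1, ih.2]
    exact fun k => (step k).1
  intro n hn h1
  match n, hn with
  | 1, _ => rw [pow_one] at h1; rw [h1] at hd; simp at hd
  | (k+2), _ =>
    have := big k
    rw [h1, trace_one2] at this
    omega

lemma order_detpos (G : M2) (hd : G.det = 1) (ht : 3 ≤ Matrix.trace G) :
    ∀ n : ℕ, 0 < n → G ^ n ≠ 1 := by
  have hrec : ∀ k : ℕ, Matrix.trace (G^(k+2)) =
      Matrix.trace G * Matrix.trace (G^(k+1)) - Matrix.trace (G^k) := by
    intro k; rw [trace_rec, hd]; ring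
  have mono : ∀ k : ℕ, 2 ≤ Matrix.trace (G^k) ∧ Matrix.trace (G^k) ≤ Matrix.trace (G^(k+1)) := by
    intro k; induction k with
    | zero =>
      refine ⟨by rw [pow_zero, trace_one2], ?_⟩
      rw [pow_zero, trace_one2, pow_one]; omega
    | succ k ih =>
      have h1 : 2 ≤ Matrix.trace (G^(k+1)) := le_trans ih.1 ih.2
      refine ⟨h1, ?_⟩
      rw [hrec k]
      nlinarith [ih.1, ih.2]
  have big : ∀ k : ℕ, 3 ≤ Matrix.trace (G^(k+1)) := by
    intro k; induction k with
    | zero => rw [pow_one]; exact ht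
    | succ k ih => exact le_trans ih (mono (k+1)).2
  intro n hn h1
  match n, hn with
  | (k+1), _ =>
    have := big k
    rw [h1, trace_one2] at this
    omega

lemma unip (G : M2) (hd : G.det = 1) (ht : Matrix.trace G = 2) {n : ℕ} (hn : 0 < n)
    (h1 : G^n = 1) : G = 1 := by
  have hCH := CH2 G
  rw [hd, ht] at hCH
  have hN2 : (G - 1) * (G - 1) = 0 := by
    have expand : (G - 1) * (G - 1) = G^2 - G - G + 1 := by noncomm_ring
    rw [expand, hCH]
    have : (2:ℤ) • G = G + G := two_smul ℤ G
    rw [this, one_smul]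
    abel
  have pow_form : ∀ k : ℕ, G ^ k = 1 + (k:ℤ) • (G - 1) := by
    intro k; induction k with
    | zero => simp
    | succ k ih =>
      have hG : G = 1 + (G - 1) := by abel
      rw [pow_succ, ih]
      nth_rewrite 2 [hG]
      simp only [mul_add, add_mul, mul_one, one_mul, smul_mul_assoc, hN2, smul_zero]
      push_cast
      rw [add_smul, one_smul]
      abel
  have h2 := pow_form n
  rw [h1] at h2
  have hz : (n:ℤ) • (G - 1) = 0 := (left_eq_add.mp h2)
  have hn' : (n:ℤ) ≠ 0 := by exact_mod_cast hn.ne'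
  rcases smul_eq_zero.mp hz with h | h
  · exact absurd h hn'
  · rw [sub_eq_zero] at h; exact h

lemma eq_one_of_entries (G : M2) (h00 : G 0 0 = 1) (h01 : G 0 1 = 0) (h10 : G 1 0 = 0)
    (h11 : G 1 1 = 1) : G = 1 := by
  ext i j
  fin_cases i <;> fin_cases j <;> simp [Matrix.one_apply, h00, h01, h10, h11]

lemma fixed_vec (G : M2) (hdet : (G - 1).det = 0) (hne : G ≠ 1) :
    ∃ v : Q2, v ≠ 0 ∧ applyM G v = v := by
  have e : (G 0 0 - 1) * (G 1 1 - 1) - G 0 1 * G 1 0 = 0 := by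
    have h := hdet
    rw [Matrix.det_fin_two] at h
    simpa [Matrix.sub_apply, Matrix.one_apply] using h
  have eQ : (((G 0 0 : ℤ):ℚ) - 1) * (((G 1 1 : ℤ):ℚ) - 1)
      - ((G 0 1 : ℤ):ℚ) * ((G 1 0 : ℤ):ℚ) = 0 := by
    have := congrArg (fun z : ℤ => (z : ℚ)) e
    push_cast at this
    linear_combination this
  by_cases hab : G 0 0 - 1 = 0 ∧ G 0 1 = 0
  · refine ⟨(((G 1 1 - 1 : ℤ) : ℚ), ((-(G 1 0) : ℤ) : ℚ)), ?_, ?_⟩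
    · intro h0
      rw [Prod.ext_iff] at h0
      simp only [Prod.fst_zero, Prod.snd_zero, Int.cast_eq_zero] at h0
      exact hne (eq_one_of_entries G (by omega) hab.2 (by omega) (by omega))
    · have ha : ((G 0 0 : ℤ) : ℚ) = 1 := by
        have : G 0 0 = 1 := by omega
        rw [this]; norm_num
      have hb : ((G 0 1 : ℤ) : ℚ) = 0 := by rw [hab.2]; norm_num
      rw [applyM, Prod.ext_iff]
      constructor
      · simp only; push_cast; rw [ha, hb]; push_cast; ring
      · simp only; push_cast; push_cast at ha hb
        linear_combination (((G 1 1 :ℤ):ℚ) - 1) * ha - ((G 1 0 : ℤ):ℚ) * hb - eQ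
  · refine ⟨(((G 0 1 : ℤ) : ℚ), ((-(G 0 0 - 1) : ℤ) : ℚ)), ?_, ?_⟩
    · intro h0
      rw [Prod.ext_iff] at h0
      simp only [Prod.fst_zero, Prod.snd_zero, Int.cast_eq_zero] at h0
      exact hab ⟨by omega, by exact_mod_cast h0.1⟩
    · rw [applyM, Prod.ext_iff]
      constructor
      · simp only; push_cast; ring
      · simp only; push_cast; push_cast at eQ; linear_combination -eQ

lemma hull_box (V : Finset Z2) :
    ∃ R : ℚ, 0 < R ∧ ∀ x ∈ hull V, |x.1| ≤ R ∧ |x.2| ≤ R := by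
  classical
  set N : ℕ := V.sup fun v => (max |v.1| |v.2|).toNat with hN
  refine ⟨(N : ℚ) + 1, by positivity, ?_⟩
  have hC : Convex ℚ {x : Q2 | |x.1| ≤ (N:ℚ)+1 ∧ |x.2| ≤ (N:ℚ)+1} := by
    intro x hx y hy a b ha hb hab
    simp only [Set.mem_setOf_eq] at hx hy ⊢
    have h1 : (a • x + b • y).1 = a * x.1 + b * y.1 := rfl
    have h2 : (a • x + b • y).2 = a * x.2 + b * y.2 := rfl
    rw [h1, h2]
    constructor
    · calc |a * x.1 + b * y.1| ≤ |a * x.1| + |b * y.1| := abs_add_le _ _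
        _ = a * |x.1| + b * |y.1| := by rw [abs_mul, abs_mul, abs_of_nonneg ha, abs_of_nonneg hb]
        _ ≤ (N:ℚ)+1 := by nlinarith [hx.1, hy.1, abs_nonneg x.1, abs_nonneg y.1]
    · calc |a * x.2 + b * y.2| ≤ |a * x.2| + |b * y.2| := abs_add_le _ _
        _ = a * |x.2| + b * |y.2| := by rw [abs_mul, abs_mul, abs_of_nonneg ha, abs_of_nonneg hb]
        _ ≤ (N:ℚ)+1 := by nlinarith [hx.2, hy.2, abs_nonneg x.2, abs_nonneg y.2]
  intro x hx
  have hsub : hull V ⊆ {x : Q2 | |x.1| ≤ (N:ℚ)+1 ∧ |x.2| ≤ (N:ℚ)+1} := by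
    apply convexHull_min _ hC
    rintro _ ⟨v, hv, rfl⟩
    have h1 : |v.1| ≤ (N : ℤ) := by
      calc |v.1| ≤ ((max |v.1| |v.2|).toNat : ℤ) := le_trans (le_max_left _ _) (Int.self_le_toNat _)
        _ ≤ (N : ℤ) := by exact_mod_cast Finset.le_sup (f := fun v => (max |v.1| |v.2|).toNat) hv
    have h2 : |v.2| ≤ (N : ℤ) := by
      calc |v.2| ≤ ((max |v.1| |v.2|).toNat : ℤ) := le_trans (le_max_right _ _) (Int.self_le_toNat _)
        _ ≤ (N : ℤ) := by exact_mod_cast Finset.le_sup (f := fun v => (max |v.1| |v.2|).toNat) hv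
    constructor
    · show |((v.1 : ℤ) : ℚ)| ≤ (N:ℚ)+1
      rw [← Int.cast_abs]
      have : ((|v.1| : ℤ) : ℚ) ≤ (N : ℚ) := by exact_mod_cast h1
      linarith
    · show |((v.2 : ℤ) : ℚ)| ≤ (N:ℚ)+1
      rw [← Int.cast_abs]
      have : ((|v.2| : ℤ) : ℚ) ≤ (N : ℚ) := by exact_mod_cast h2
      linarith
  exact hsub hx

lemma inner_pts (V : Finset Z2) (h0 : (0 : Q2) ∈ interior (hull V)) :
    ∃ r : ℚ, 0 < r ∧ ((r, 0) : Q2) ∈ hull V ∧ ((0, r) : Q2) ∈ hull V := by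
  rw [mem_interior_iff_mem_nhds] at h0
  rcases Metric.mem_nhds_iff.mp h0 with ⟨ε, hε, hball⟩
  rcases exists_rat_btwn hε with ⟨r, hr0, hrε⟩
  have hrQ : (0 : ℚ) < r := by exact_mod_cast hr0
  have habs : |(r:ℝ)| < ε := by rw [abs_of_pos hr0]; exact hrε
  refine ⟨r, hrQ, ?_, ?_⟩
  · apply hball
    rw [Metric.mem_ball, Prod.dist_eq]
    have e1 : dist ((r,(0:ℚ)):Q2).1 (0:Q2).1 = |(r:ℝ)| := by
      rw [Rat.dist_eq]; simp [← Rat.cast_abs]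
    have e2 : dist ((r,(0:ℚ)):Q2).2 (0:Q2).2 = 0 := by
      simp
    rw [e1, e2]
    exact max_lt habs hε
  · apply hball
    rw [Metric.mem_ball, Prod.dist_eq]
    have e1 : dist (((0:ℚ),r):Q2).1 (0:Q2).1 = 0 := by
      simp
    have e2 : dist (((0:ℚ),r):Q2).2 (0:Q2).2 = |(r:ℝ)| := by
      rw [Rat.dist_eq]; simp [← Rat.cast_abs]
    rw [e1, e2]
    exact max_lt hε habs

lemma aut_finite_order (V : Finset Z2) (h0 : (0 : Q2) ∈ interior (hull V)) {G : M2}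
    (hG : IsAut G (hull V)) : ∃ n : ℕ, 0 < n ∧ G ^ n = 1 := by
  classical
  obtain ⟨R, hR, hbox⟩ := hull_box V
  obtain ⟨r, hr, hp1, hp2⟩ := inner_pts V h0
  set C : ℤ := ⌈R / r⌉ with hC
  have key : ∀ a : ℤ, |(a:ℚ) * r| ≤ R → a ∈ Finset.Icc (-C) C := by
    intro a ha
    rw [abs_mul, abs_of_pos hr] at ha
    have h1 : ((|a| : ℤ) : ℚ) ≤ R / r := by
      rw [Int.cast_abs, le_div_iff₀ hr]; exact ha
    have h2 : (|a| : ℤ) ≤ C := by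
      have := le_trans h1 (Int.le_ceil _)
      exact_mod_cast this
    rw [Finset.mem_Icc]
    constructor
    · linarith [neg_abs_le a]
    · linarith [le_abs_self a]
  have entry : ∀ A : M2, IsAut A (hull V) → ∀ i j, A i j ∈ Finset.Icc (-C) C := by
    intro A hA i j
    have k1 := hbox _ (hA.mem hp1)
    have k2 := hbox _ (hA.mem hp2)
    simp only [applyM, mul_zero, zero_mul, add_zero, zero_add, mul_one] at k1 k2
    fin_cases i <;> fin_cases j
    · exact key _ (by simpa using k1.1)
    · exact key _ (by simpa using k2.1)
    · exact key _ (by simpa using k1.2)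
    · exact key _ (by simpa using k2.2)
  have mem : ∀ n : ℕ, ∀ i j, (G^n) i j ∈ Finset.Icc (-C) C := fun n => entry _ (hG.pow n)
  let f : ℕ → (Fin 2 → Fin 2 → {z // z ∈ Finset.Icc (-C) C}) := fun n i j => ⟨(G^n) i j, mem n i j⟩
  obtain ⟨a, b, hab, hfab⟩ := Finite.exists_ne_map_eq_of_infinite f
  have hpow : G ^ a = G ^ b := by
    ext i j
    have := congrFun (congrFun hfab i) j
    exact Subtype.ext_iff.mp this
  have hu : IsUnit G := (Matrix.isUnit_iff_isUnit_det G).mpr hG.1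
  rcases hab.lt_or_gt with hlt | hlt
  · refine ⟨b - a, by omega, ?_⟩
    have heq : G ^ a * G ^ (b - a) = G ^ a * 1 := by
      rw [mul_one, ← pow_add, show a + (b - a) = b from by omega]
      exact hpow.symm
    exact (hu.pow a).mul_left_cancel heq
  · refine ⟨a - b, by omega, ?_⟩
    have heq : G ^ b * G ^ (a - b) = G ^ b * 1 := by
      rw [mul_one, ← pow_add, show b + (a - b) = a from by omega]
      exact hpow
    exact (hu.pow b).mul_left_cancel heq

lemma good_element (V : Finset Z2) (hF : IsFanoPolygon V) (hS : SymmetricPolygon (hull V)) :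
    ∃ H : M2, IsAut H (hull V) ∧ (H = -(1 : M2) ∨ (1:M2) + H + H ^ 2 = 0) := by
  have finord : ∀ G : M2, IsAut G (hull V) → ∃ n : ℕ, 0 < n ∧ G ^ n = 1 :=
    fun G hG => aut_finite_order V hF.1 hG
  by_cases hcase : ∃ G : M2, IsAut G (hull V) ∧ (G - 1).det ≠ 0
  · obtain ⟨G, hG, hGd⟩ := hcase
    obtain ⟨n, hn, hGn⟩ := finord G hG
    have hdsub := det_sub_one G
    have negpow : (-G) ^ (2 * n) = 1 := by
      rw [pow_mul, neg_sq, ← pow_mul, mul_comm 2 n, pow_mul, hGn, one_pow]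
    have hdetneg : (-G).det = G.det := by
      rw [Matrix.det_neg]; simp
    have htrneg : Matrix.trace (-G) = - Matrix.trace G := by simp
    rcases Int.isUnit_iff.mp hG.1 with h1 | h1
    · -- det = 1
      have htne : Matrix.trace G ≠ 2 := fun h => hGd (by rw [hdsub, h1, h]; ring)
      have hb1 : Matrix.trace G < 3 := by
        by_contra hlt
        push_neg at hlt
        exact order_detpos G h1 hlt n hn hGn
      have hb2 : -3 < Matrix.trace G := by
        by_contra hlt
        push_neg at hlt
        refine order_detpos (-G) (by rw [hdetneg, h1]) (by omega) (2*n) (by omega) negpow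
      have hcases : Matrix.trace G = -2 ∨ Matrix.trace G = -1 ∨ Matrix.trace G = 0 ∨
          Matrix.trace G = 1 := by omega
      have hCH := CH2 G
      rw [h1] at hCH
      rcases hcases with ht | ht | ht | ht
      · -- G = -1
        have hu : -G = 1 := unip (-G) (by rw [hdetneg, h1]) (by omega) (by omega : 0 < 2*n) negpow
        refine ⟨G, hG, Or.inl ?_⟩
        rw [← neg_neg G, hu]
      · -- 1 + G + G² = 0
        rw [ht] at hCH
        refine ⟨G, hG, Or.inr ?_⟩
        rw [hCH]
        simp only [neg_smul, one_smul]
        abel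
      · -- G² = -1
        rw [ht] at hCH
        simp only [zero_smul, one_smul, zero_sub] at hCH
        exact ⟨G^2, hG.pow 2, Or.inl hCH⟩
      · -- H = G², 1 + H + H² = 0
        rw [ht] at hCH
        simp only [one_smul] at hCH
        refine ⟨G^2, hG.pow 2, Or.inr ?_⟩
        have hsq : (G^2)^2 = (G - 1) * (G - 1) := by rw [hCH, pow_two]
        have expand : (G - 1) * (G - 1) = G^2 - G - G + 1 := by noncomm_ring
        rw [hsq, expand, hCH]
        abel
    · -- det = -1 : impossible
      exfalso
      have ht0 : Matrix.trace G ≠ 0 := fun h => hGd (by rw [hdsub, h1, h]; ring)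
      rcases lt_or_gt_of_ne ht0 with hlt | hlt
      · exact order_detneg (-G) (by rw [hdetneg, h1]) (by omega) (2*n) (by omega) negpow
      · exact order_detneg G h1 (by omega) n hn hGn
  · -- all automorphisms have eigenvalue 1 : contradiction
    exfalso
    push_neg at hcase
    have moved : ∀ v : Q2, v ≠ 0 → ∃ H : M2, IsAut H (hull V) ∧ applyM H v ≠ v := by
      intro v hv
      by_contra hc
      push_neg at hc
      have hvmem : v ∈ {x : Q2 | ∀ G, IsAut G (hull V) → applyM G x = x} := hc
      rw [hS] at hvmem
      exact hv hvmem
    -- any nontrivial automorphism is an involution with det -1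
    have invol : ∀ A : M2, IsAut A (hull V) → A ≠ 1 → A.det = -1 := by
      intro A hA hAne
      rcases Int.isUnit_iff.mp hA.1 with h1 | h1
      · exfalso
        have hd := hcase A hA
        rw [det_sub_one, h1] at hd
        have ht : Matrix.trace A = 2 := by omega
        obtain ⟨n, hn, hAn⟩ := finord A hA
        exact hAne (unip A h1 ht hn hAn)
      · exact h1
    obtain ⟨G, hG, hGmv⟩ := moved ((1:ℚ), (0:ℚ)) (by
      intro hcontra
      rw [Prod.ext_iff] at hcontra
      exact one_ne_zero hcontra.1)
    have hGne : G ≠ 1 := fun h => hGmv (by rw [h, applyM_one])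
    have hGdet := invol G hG hGne
    have hGtr : Matrix.trace G = 0 := by
      have hd := hcase G hG
      rw [det_sub_one, hGdet] at hd
      omega
    have hG2 : G * G = 1 := by
      have hCH := CH2 G
      rw [hGdet, hGtr] at hCH
      simp only [zero_smul, neg_smul, one_smul, zero_sub, sub_neg_eq_add, zero_add] at hCH
      rw [← pow_two, hCH]
    obtain ⟨v, hv0, hvfix⟩ := fixed_vec G (hcase G hG) hGne
    obtain ⟨H, hH, hHv⟩ := moved v hv0
    have hHne : H ≠ 1 := fun h => hHv (by rw [h, applyM_one])
    have hHdet := invol H hH hHne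
    have hK : IsAut (G * H) (hull V) := hG.mul hH
    have hKdet : (G * H).det = 1 := by rw [Matrix.det_mul, hGdet, hHdet]; ring
    have hKtr : Matrix.trace (G * H) = 2 := by
      have hd := hcase (G * H) hK
      rw [det_sub_one, hKdet] at hd
      omega
    obtain ⟨m, hm, hKm⟩ := finord (G * H) hK
    have hK1 : G * H = 1 := unip (G * H) hKdet hKtr hm hKm
    have hHG : H = G := by
      have : G * (G * H) = G * 1 := by rw [hK1]
      rw [← mul_assoc, hG2, one_mul, mul_one] at this
      exact this
    rw [hHG] at hHv
    exact hHv hvfix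

/-- A symmetric Fano polygon is contained in the strip `{-h ≤ u(x) ≤ 2h}` supported by any
of its edges `E`, where `u` is the primitive inner normal and `h` the height of `E`. -/
theorem stmt_14 (V : Finset Z2) (hF : IsFanoPolygon V)
    (hS : SymmetricPolygon (hull V))
    (E : Set Q2) (u : Z2) (h : ℤ) (hE : IsEdge (hull V) E u h) :
    ∀ x ∈ hull V, -(h : ℚ) ≤ dotQ u x ∧ dotQ u x ≤ 2 * (h : ℚ) := by
  obtain ⟨H, hH, hHgood⟩ := good_element V hF hS
  obtain ⟨hu_prim, hh_pos, hlow, hEdef, hEtwo⟩ := hE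
  intro x hx
  refine ⟨hlow x hx, ?_⟩
  have hhQ : (0:ℚ) < (h:ℚ) := by exact_mod_cast hh_pos
  rcases hHgood with hneg | hthree
  · -- H = -1 : centrally symmetric
    have hmem : applyM H x ∈ hull V := hH.mem hx
    have hcalc : applyM H x = (-x.1, -x.2) := by
      rw [hneg]
      simp [applyM, Matrix.neg_apply, Matrix.one_apply]
    rw [hcalc] at hmem
    have hlow2 := hlow _ hmem
    have : dotQ u (-x.1, -x.2) = - dotQ u x := by simp [dotQ]; ring
    rw [this] at hlow2
    linarith
  · -- 1 + H + H² = 0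
    set y := applyM H x with hy
    set z := applyM H y with hz
    have hymem : y ∈ hull V := hH.mem hx
    have hzmem : z ∈ hull V := hH.mem hymem
    have e00 : ((1:M2) + H + H^2) 0 0 = 0 := by rw [hthree]; rfl
    have e01 : ((1:M2) + H + H^2) 0 1 = 0 := by rw [hthree]; rfl
    have e10 : ((1:M2) + H + H^2) 1 0 = 0 := by rw [hthree]; rfl
    have e11 : ((1:M2) + H + H^2) 1 1 = 0 := by rw [hthree]; rfl
    simp only [Matrix.add_apply, Matrix.one_apply, pow_two, Matrix.mul_apply,
      Fin.sum_univ_two, if_pos rfl] at e00 e01 e10 e11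
    norm_num at e00 e01 e10 e11
    have f00 := congrArg (fun z : ℤ => (z:ℚ)) e00
    have f01 := congrArg (fun z : ℤ => (z:ℚ)) e01
    have f10 := congrArg (fun z : ℤ => (z:ℚ)) e10
    have f11 := congrArg (fun z : ℤ => (z:ℚ)) e11
    push_cast at f00 f01 f10 f11
    have hsum : dotQ u x + dotQ u y + dotQ u z = 0 := by
      rw [hz, hy]
      simp only [dotQ, applyM]
      linear_combination ((u.1:ℚ) * x.1) * f00 + ((u.1:ℚ) * x.2) * f01 +
        ((u.2:ℚ) * x.1) * f10 + ((u.2:ℚ) * x.2) * f11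
    have hly := hlow y hymem
    have hlz := hlow z hzmem
    linarith
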